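/- arXiv:2006.00475 — 6 statements merged into one kernel-verified Lean document; each statement's English description precedes it below -/
import Mathlib

section
/- Let $f, g : \mathcal{D} \to \mathbb{R}$ be convex functions on a convex body $\mathcal{D} \subset \mathbb{R}^d$, with $f$ minimised at $x_\star$ and $f_\star \le g_\star$ (minima over $\mathcal{D}$). Let $\epsilon > 0$ and $K = \{x \in \mathcal{D} : g(x) \le g_\star + \epsilon\}$, and suppose $x_\star \notin K$. If $x, y \in \partial K$ with $g(x) = g_\star + \epsilon$, $g(y) \le g_\star + \epsilon$, and $x = \psi x_\star + (1-\psi) y$ for some $\psi \in (0,1)$, then $(f(x) - g(x))^2 + (f(y) - g(y))^2 \ge \tfrac{1}{2}\psi^2 (g_\star + \epsilon - f_\star)^2$. -/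
/-!
Convexity of `f` on the segment from `x⋆` to `y`, together with `g x = g⋆ + ε ≥ g y`, gives the
linear bound `ψ (g⋆ + ε - f⋆) ≤ (1 - ψ)(f y - g y) - (f x - g x)`; Cauchy–Schwarz turns it into
the quadratic one.
-/

open Set

/-- Cauchy–Schwarz for the vectors `(-1, t)` and `(a, b)`, with `1 + t² ≤ 2`. -/
theorem half_sq_le_sq_add_sq_of_le_mul_sub {a b t c : ℝ} (ht : |t| ≤ 1) (hc : 0 ≤ c)
    (h : c ≤ t * b - a) : 1 / 2 * c ^ 2 ≤ a ^ 2 + b ^ 2 := by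
  have ht2 : t ^ 2 ≤ 1 := by nlinarith [sq_abs t, abs_nonneg t]
  have hsq : c ^ 2 ≤ (t * b - a) ^ 2 := pow_le_pow_left₀ hc h 2
  nlinarith [sq_nonneg (t * a + b), mul_nonneg (sub_nonneg.2 ht2) (sq_nonneg b)]

theorem IsMinOn.csInf_image_eq {α β : Type*} [ConditionallyCompleteLattice β] {f : α → β}
    {s : Set α} {a : α} (ha : a ∈ s) (hmin : IsMinOn f s a) : sInf (f '' s) = f a :=
  IsLeast.csInf_eq ⟨mem_image_of_mem f ha, forall_mem_image.2 hmin⟩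

theorem line_of_sight_general {d : ℕ} (D : Set (EuclideanSpace ℝ (Fin d)))
    (f g : EuclideanSpace ℝ (Fin d) → ℝ)
    (hf : ConvexOn ℝ D f)
    (xstar : EuclideanSpace ℝ (Fin d)) (hxs : xstar ∈ D) (hmin : IsMinOn f D xstar)
    (hfg : sInf (f '' D) ≤ sInf (g '' D))
    (ε : ℝ) (hε : 0 < ε)
    (x y : EuclideanSpace ℝ (Fin d)) (hy : y ∈ D)
    (hgx : g x = sInf (g '' D) + ε) (hgy : g y ≤ sInf (g '' D) + ε)
    (ψ : ℝ) (hψ : ψ ∈ Ioo (0 : ℝ) 1)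
    (hxy : x = ψ • xstar + (1 - ψ) • y) :
    (f x - g x) ^ 2 + (f y - g y) ^ 2
      ≥ (1 / 2) * ψ ^ 2 * (sInf (g '' D) + ε - sInf (f '' D)) ^ 2 := by
  obtain ⟨hψ0, hψ1⟩ := hψ
  rw [hmin.csInf_image_eq hxs] at hfg ⊢
  set G := sInf (g '' D)
  have hfx : f x ≤ ψ * f xstar + (1 - ψ) * f y := by
    simpa only [hxy, smul_eq_mul] using
      hf.2 hxs hy hψ0.le (sub_nonneg.2 hψ1.le) (add_sub_cancel ψ 1)
  have hgap : ψ * (G + ε - f xstar) ≤ (1 - ψ) * (f y - g y) - (f x - g x) := by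
    have := mul_le_mul_of_nonneg_left hgy (sub_nonneg.2 hψ1.le)
    linarith
  have hψ' : |1 - ψ| ≤ 1 := abs_le.2 ⟨by linarith, by linarith⟩
  have := half_sq_le_sq_add_sq_of_le_mul_sub hψ' (mul_nonneg hψ0.le (by linarith)) hgap
  linarith [mul_pow ψ (G + ε - f xstar) 2]

theorem line_of_sight {d : ℕ} (D : Set (EuclideanSpace ℝ (Fin d)))
    (hDc : IsCompact D) (hDconv : Convex ℝ D) (hDint : (interior D).Nonempty)
    (f g : EuclideanSpace ℝ (Fin d) → ℝ)
    (hf : ConvexOn ℝ D f) (hg : ConvexOn ℝ D g)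
    (xstar : EuclideanSpace ℝ (Fin d)) (hxs : xstar ∈ D) (hmin : IsMinOn f D xstar)
    (hfg : sInf (f '' D) ≤ sInf (g '' D))
    (ε : ℝ) (hε : 0 < ε)
    (hxsK : xstar ∉ {p ∈ D | g p ≤ sInf (g '' D) + ε})
    (x y : EuclideanSpace ℝ (Fin d)) (hx : x ∈ D) (hy : y ∈ D)
    (hgx : g x = sInf (g '' D) + ε) (hgy : g y ≤ sInf (g '' D) + ε)
    (ψ : ℝ) (hψ : ψ ∈ Ioo (0 : ℝ) 1)
    (hxy : x = ψ • xstar + (1 - ψ) • y) :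
    (f x - g x) ^ 2 + (f y - g y) ^ 2
      ≥ (1 / 2) * ψ ^ 2 * (sInf (g '' D) + ε - sInf (f '' D)) ^ 2 :=
  line_of_sight_general D f g hf xstar hxs hmin hfg ε hε x y hy hgx hgy ψ hψ hxy
end

section
/- Suppose $\mathscr{F} = \bigcup_{i=1}^k \mathscr{F}_i$ and for each $i$ there is a probability measure $\rho_i$ on $\mathcal{K}$ such that for all $f \in \mathscr{F}_i$: $\int_{\mathcal{K}} \bar f \, d\rho_i - f_\star \le \alpha + \sqrt{\beta \int_{\mathcal{K}} (\bar f - f)^2 \, d\rho_i}$. Then for any finitely supported probability distribution $\mu$ on $\mathscr{F}$, the mixture $\rho = \sum_{i=1}^k \mu(\mathscr{F}_i)\, \rho_i$ (with the $\mathscr{F}_i$ made disjoint) satisfies $\int_{\mathcal{K}} \bar f \, d\rho - \int_{\mathscr{F}} f_\star \, d\mu(f) \le \alpha + \sqrt{\beta k \int_{\mathscr{F}} \int_{\mathcal{K}} (\bar f - f)^2 \, d\rho \, d\mu(f)}$. -/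
/-!
Write `q i = μ(𝓕 i)` and `V f = ∫ (f̄ - f)² dρ_i` for `f ∈ 𝓕 i`. Integrating against the mixture
`ρ = ∑ q i • ρ i` and applying the hypothesis to each `f` in the support of `μ` gives
`∫ f̄ dρ - ∫ f_⋆ dμ ≤ α + √β ∑_f μ(f) √(V f)`. Inside a piece, Jensen's inequality for `√` gives
`∑_{f ∈ 𝓕 i} μ(f) √(V f) ≤ √(q i ∑_{f ∈ 𝓕 i} μ(f) V f)`, and Cauchy–Schwarz over the `k` pieces
bounds the sum of these by `√(k ∑_f μ(f) q_{i(f)} V f)`. Finally `q_{i(f)} V f ≤ ∫ (f̄ - f)² dρ`,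
since `ρ` dominates `q_{i(f)} • ρ_{i(f)}`.
-/

open MeasureTheory Set Finset

lemma Real.sum_mul_sqrt_le_sqrt_sum_mul_sum {ι : Type*} (s : Finset ι) {w V : ι → ℝ}
    (hw : ∀ i ∈ s, 0 ≤ w i) (hV : ∀ i ∈ s, 0 ≤ V i) :
    ∑ i ∈ s, w i * √(V i) ≤ √((∑ i ∈ s, w i) * ∑ i ∈ s, w i * V i) := by
  have hwV : ∀ i ∈ s, 0 ≤ w i * V i := fun i hi => mul_nonneg (hw i hi) (hV i hi)
  calc ∑ i ∈ s, w i * √(V i) = ∑ i ∈ s, √(w i) * √(w i * V i) := by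
        refine sum_congr rfl fun i hi => ?_
        rw [Real.sqrt_mul (hw i hi), ← mul_assoc, Real.mul_self_sqrt (hw i hi)]
    _ ≤ √(∑ i ∈ s, √(w i) ^ 2) * √(∑ i ∈ s, √(w i * V i) ^ 2) :=
        Real.sum_mul_le_sqrt_mul_sqrt s _ _
    _ = √((∑ i ∈ s, w i) * ∑ i ∈ s, w i * V i) := by
        rw [sum_congr rfl fun i hi => Real.sq_sqrt (hw i hi),
          sum_congr rfl fun i hi => Real.sq_sqrt (hwV i hi), Real.sqrt_mul (sum_nonneg hw)]

lemma Real.sum_sqrt_le_sqrt_card_mul_sum {ι : Type*} (s : Finset ι) {x : ι → ℝ}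
    (hx : ∀ i ∈ s, 0 ≤ x i) :
    ∑ i ∈ s, √(x i) ≤ √(#s * ∑ i ∈ s, x i) := by
  simpa using Real.sum_mul_sqrt_le_sqrt_sum_mul_sum s (w := 1) (fun _ _ => zero_le_one) hx

lemma Finset.sum_fiberwise_sum_mul {ι κ R : Type*} [Fintype κ] [DecidableEq κ]
    [NonUnitalNonAssocSemiring R] (s : Finset ι) (g : ι → κ) (w : ι → R) (A : κ → R) :
    ∑ j, (∑ i ∈ s with g i = j, w i) * A j = ∑ i ∈ s, w i * A (g i) := by
  rw [← sum_fiberwise s g]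
  refine sum_congr rfl fun j _ => ?_
  rw [sum_mul]
  exact sum_congr rfl fun i hi => by rw [(mem_filter.1 hi).2]

lemma Finset.sum_indicator_eq_sum_filter_of_pairwise_disjoint {α ι M : Type*} [AddCommMonoid M]
    [DecidableEq ι] {F : ι → Set α} (hF : Pairwise (Function.onFun Disjoint F)) {s : Finset α}
    {g : α → ι} (hg : ∀ a ∈ s, a ∈ F (g a)) (w : α → M) (i : ι) :
    ∑ a ∈ s, (F i).indicator w a = ∑ a ∈ s with g a = i, w a := by
  rw [sum_filter]
  refine sum_congr rfl fun a ha => ?_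
  by_cases hai : g a = i
  · rw [if_pos hai, indicator_of_mem (hai ▸ hg a ha)]
  · rw [if_neg hai, indicator_of_notMem fun h => (hF hai).notMem_of_mem_left (hg a ha) h]

lemma Real.sum_mul_sqrt_le_sqrt_card_mul_sum_fiberwise {α ι : Type*} [Fintype ι] [DecidableEq ι]
    (s : Finset α) (g : α → ι) {w V : α → ℝ} (hw : ∀ a ∈ s, 0 ≤ w a) (hV : ∀ a ∈ s, 0 ≤ V a) :
    ∑ a ∈ s, w a * √(V a) ≤
      √(Fintype.card ι * ∑ a ∈ s, w a * ((∑ b ∈ s with g b = g a, w b) * V a)) := by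
  set q : ι → ℝ := fun i => ∑ b ∈ s with g b = i, w b
  have hfiber : ∀ i, ∑ a ∈ s with g a = i, w a * √(V a) ≤
      √(∑ a ∈ s with g a = i, w a * (q (g a) * V a)) := by
    intro i
    calc ∑ a ∈ s with g a = i, w a * √(V a)
        ≤ √(q i * ∑ a ∈ s with g a = i, w a * V a) :=
          Real.sum_mul_sqrt_le_sqrt_sum_mul_sum _ (fun a ha => hw a (mem_filter.1 ha).1)
            (fun a ha => hV a (mem_filter.1 ha).1)
      _ = √(∑ a ∈ s with g a = i, w a * (q (g a) * V a)) := by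
          rw [mul_sum]
          refine congrArg _ (sum_congr rfl fun a ha => ?_)
          rw [(mem_filter.1 ha).2]
          ring
  calc ∑ a ∈ s, w a * √(V a) = ∑ i, ∑ a ∈ s with g a = i, w a * √(V a) :=
        (sum_fiberwise s g _).symm
    _ ≤ ∑ i, √(∑ a ∈ s with g a = i, w a * (q (g a) * V a)) := sum_le_sum fun i _ => hfiber i
    _ ≤ √(Fintype.card ι * ∑ i, ∑ a ∈ s with g a = i, w a * (q (g a) * V a)) :=
        Real.sum_sqrt_le_sqrt_card_mul_sum univ fun i _ => sum_nonneg fun a ha =>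
          mul_nonneg (hw a (mem_filter.1 ha).1) (mul_nonneg
            (sum_nonneg fun b hb => hw b (mem_filter.1 hb).1) (hV a (mem_filter.1 ha).1))
    _ = _ := by rw [sum_fiberwise s g]

lemma sum_fiberwise_mul_sub_le_add_sqrt {α ι : Type*} [Fintype ι] [DecidableEq ι] (s : Finset α)
    (g : α → ι) {w m V W : α → ℝ} {A : ι → ℝ} {a β : ℝ} (hw : ∀ x ∈ s, 0 ≤ w x)
    (hwsum : ∑ x ∈ s, w x = 1) (hV : ∀ x ∈ s, 0 ≤ V x)
    (hbound : ∀ x ∈ s, A (g x) - m x ≤ a + √(β * V x))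
    (hW : ∀ x ∈ s, (∑ b ∈ s with g b = g x, w b) * V x ≤ W x) :
    ∑ i, (∑ x ∈ s with g x = i, w x) * A i - ∑ x ∈ s, w x * m x ≤
      a + √(β * Fintype.card ι * ∑ x ∈ s, w x * W x) := by
  have hW_nonneg : ∀ x ∈ s, 0 ≤ W x := fun x hx =>
    (mul_nonneg (sum_nonneg fun b hb => hw b (mem_filter.1 hb).1) (hV x hx)).trans (hW x hx)
  calc ∑ i, (∑ x ∈ s with g x = i, w x) * A i - ∑ x ∈ s, w x * m x
      = ∑ x ∈ s, w x * (A (g x) - m x) := by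
        simp only [sum_fiberwise_sum_mul, mul_sub, sum_sub_distrib]
    _ ≤ ∑ x ∈ s, w x * (a + √β * √(V x)) := by
        gcongr with x hx
        · exact hw x hx
        · rw [← Real.sqrt_mul' β (hV x hx)]
          exact hbound x hx
    _ = a + √β * ∑ x ∈ s, w x * √(V x) := by
        simp only [mul_add, sum_add_distrib, ← sum_mul, hwsum, one_mul, mul_sum, mul_left_comm]
    _ ≤ a + √β * √(Fintype.card ι * ∑ x ∈ s, w x * ((∑ b ∈ s with g b = g x, w b) * V x)) := by
        gcongr
        exact Real.sum_mul_sqrt_le_sqrt_card_mul_sum_fiberwise s g hw hV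
    _ ≤ a + √β * √(Fintype.card ι * ∑ x ∈ s, w x * W x) := by
        gcongr with x hx
        · exact hw x hx
        · exact hW x hx
    _ = a + √(β * Fintype.card ι * ∑ x ∈ s, w x * W x) := by
        rw [mul_assoc, Real.sqrt_mul' β (mul_nonneg (Nat.cast_nonneg _)
          (sum_nonneg fun x hx => mul_nonneg (hw x hx) (hW_nonneg x hx)))]

lemma sq_sub_mem_Icc_zero_one {a b : ℝ} (ha : a ∈ Icc (0 : ℝ) 1) (hb : b ∈ Icc (0 : ℝ) 1) :
    (a - b) ^ 2 ∈ Icc (0 : ℝ) 1 :=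
  ⟨sq_nonneg _, by nlinarith [ha.1, ha.2, hb.1, hb.2]⟩

lemma MeasureTheory.IntegrableOn.of_forall_mem_Icc {α : Type*} [MeasurableSpace α]
    {μ : Measure α} [IsFiniteMeasure μ] {K : Set α} {g : α → ℝ} {a b : ℝ}
    (hK : MeasurableSet K) (hg : Measurable g) (hab : ∀ x ∈ K, g x ∈ Icc a b) :
    IntegrableOn g K μ :=
  Measure.integrableOn_of_bounded (M := max |a| |b|) (measure_ne_top _ _) hg.aestronglyMeasurable
    (ae_restrict_of_forall_mem hK fun x hx => abs_le_max_abs_abs (hab x hx).1 (hab x hx).2)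

lemma MeasureTheory.setIntegral_finset_sum_smul_measure {α ι : Type*} [MeasurableSpace α]
    (s : Finset ι) {c : ι → ENNReal} (hc : ∀ i ∈ s, c i ≠ ⊤) (μ : ι → Measure α) {K : Set α}
    {E : Type*} [NormedAddCommGroup E] [NormedSpace ℝ E] {g : α → E}
    (hg : ∀ i ∈ s, IntegrableOn g K (μ i)) :
    ∫ x in K, g x ∂(∑ i ∈ s, c i • μ i) = ∑ i ∈ s, (c i).toReal • ∫ x in K, g x ∂(μ i) := by
  rw [← Measure.restrictₗ_apply, map_sum, integral_finsetSum_measure]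
  · refine sum_congr rfl fun i _ => ?_
    rw [LinearMap.map_smul, Measure.restrictₗ_apply, integral_smul_measure]
  · intro i hi
    rw [LinearMap.map_smul, Measure.restrictₗ_apply]
    exact (hg i hi).smul_measure (hc i hi)

theorem combine_exploratory_general {d k : ℕ}
    (K : Set (EuclideanSpace ℝ (Fin d)))
    (hKm : MeasurableSet K)
    -- the pieces of the partition `𝓕 = ⋃ i, 𝓕 i`, made disjoint
    (F : Fin k → Set (EuclideanSpace ℝ (Fin d) → ℝ))
    (hFdisj : Pairwise (Function.onFun Disjoint F))
    -- all functions in `𝓕` are measurable and `[0,1]`-valued on `K`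
    (hFmeas : ∀ f ∈ ⋃ i, F i, Measurable f ∧ ∀ x ∈ K, f x ∈ Icc (0 : ℝ) 1)
    (fbar : EuclideanSpace ℝ (Fin d) → ℝ) (hfbar : fbar ∈ ⋃ i, F i)
    (α β : ℝ)
    -- the exploratory distributions for the pieces
    (ρ : Fin k → Measure (EuclideanSpace ℝ (Fin d)))
    (hρ : ∀ i, IsProbabilityMeasure (ρ i))
    (hexp : ∀ i, ∀ f ∈ F i,
      (∫ x in K, fbar x ∂(ρ i)) - sInf (f '' K)
        ≤ α + Real.sqrt (β * ∫ x in K, (fbar x - f x) ^ 2 ∂(ρ i)))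
    -- a finitely supported probability distribution `μ` on `𝓕`,
    -- given by its support `S` and weights `w`
    (S : Finset (EuclideanSpace ℝ (Fin d) → ℝ)) (hS : ↑S ⊆ ⋃ i, F i)
    (w : (EuclideanSpace ℝ (Fin d) → ℝ) → ℝ)
    (hw : ∀ f ∈ S, 0 ≤ w f) (hwsum : ∑ f ∈ S, w f = 1) :
    (∫ x in K, fbar x
        ∂(∑ i : Fin k, (ENNReal.ofReal (∑ f ∈ S, (F i).indicator w f)) • ρ i))
      - ∑ f ∈ S, w f * sInf (f '' K)
      ≤ α + Real.sqrt (β * k * ∑ f ∈ S, w f *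
          ∫ x in K, (fbar x - f x) ^ 2
            ∂(∑ i : Fin k, (ENNReal.ofReal (∑ f ∈ S, (F i).indicator w f)) • ρ i)) := by
  classical
  have : Nonempty (Fin k) := ⟨(mem_iUnion.1 hfbar).choose⟩
  choose! idx hidx using fun f (hf : f ∈ S) => mem_iUnion.1 (hS hf)
  simp only [sum_indicator_eq_sum_filter_of_pairwise_disjoint hFdisj hidx]
  set q : Fin k → ℝ := fun i => ∑ f ∈ S with idx f = i, w f
  have hq : ∀ i, 0 ≤ q i := fun i => sum_nonneg fun f hf => hw f (mem_filter.1 hf).1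
  have hmix : ∀ g, (∀ i, IntegrableOn g K (ρ i)) →
      ∫ x in K, g x ∂(∑ i, ENNReal.ofReal (q i) • ρ i) = ∑ i, q i * ∫ x in K, g x ∂(ρ i) := by
    intro g hg
    rw [setIntegral_finset_sum_smul_measure _ (fun _ _ => ENNReal.ofReal_ne_top) ρ
      fun i _ => hg i]
    simp only [ENNReal.toReal_ofReal (hq _), smul_eq_mul]
  obtain ⟨hfbar_meas, hfbar_Icc⟩ := hFmeas fbar hfbar
  have hsq_int : ∀ f ∈ S, ∀ i, IntegrableOn (fun x => (fbar x - f x) ^ 2) K (ρ i) := fun f hf i =>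
    .of_forall_mem_Icc hKm ((hfbar_meas.sub (hFmeas f (hS hf)).1).pow_const 2)
      fun x hx => sq_sub_mem_Icc_zero_one (hfbar_Icc x hx) ((hFmeas f (hS hf)).2 x hx)
  have hsq_nonneg : ∀ (f : EuclideanSpace ℝ (Fin d) → ℝ) i,
      0 ≤ ∫ x in K, (fbar x - f x) ^ 2 ∂(ρ i) := fun f i => integral_nonneg fun x => sq_nonneg _
  rw [hmix fbar fun i => .of_forall_mem_Icc hKm hfbar_meas hfbar_Icc,
    show (k : ℝ) = Fintype.card (Fin k) by simp]
  refine sum_fiberwise_mul_sub_le_add_sqrt S idx hw hwsum (fun f _ => hsq_nonneg f (idx f))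
    (fun f hf => hexp _ f (hidx f hf)) fun f hf => ?_
  rw [hmix _ (hsq_int f hf)]
  exact single_le_sum (f := fun i => q i * ∫ x in K, (fbar x - f x) ^ 2 ∂ρ i)
    (fun i _ => mul_nonneg (hq i) (hsq_nonneg f i)) (mem_univ (idx f))

theorem combine_exploratory {d k : ℕ}
    (K : Set (EuclideanSpace ℝ (Fin d)))
    (hKc : IsCompact K) (hKconv : Convex ℝ K) (hKint : (interior K).Nonempty)
    (hKm : MeasurableSet K)
    -- the pieces of the partition `𝓕 = ⋃ i, 𝓕 i`, made disjoint
    (F : Fin k → Set (EuclideanSpace ℝ (Fin d) → ℝ))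
    (hFdisj : Pairwise (Function.onFun Disjoint F))
    -- all functions in `𝓕` are measurable and `[0,1]`-valued on `K`
    (hFmeas : ∀ f ∈ ⋃ i, F i, Measurable f ∧ ∀ x ∈ K, f x ∈ Icc (0 : ℝ) 1)
    (fbar : EuclideanSpace ℝ (Fin d) → ℝ) (hfbar : fbar ∈ ⋃ i, F i)
    (α β : ℝ) (hα : 0 ≤ α) (hβ : 0 ≤ β)
    -- the exploratory distributions for the pieces
    (ρ : Fin k → Measure (EuclideanSpace ℝ (Fin d)))
    (hρ : ∀ i, IsProbabilityMeasure (ρ i))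
    (hexp : ∀ i, ∀ f ∈ F i,
      (∫ x in K, fbar x ∂(ρ i)) - sInf (f '' K)
        ≤ α + Real.sqrt (β * ∫ x in K, (fbar x - f x) ^ 2 ∂(ρ i)))
    -- a finitely supported probability distribution `μ` on `𝓕`,
    -- given by its support `S` and weights `w`
    (S : Finset (EuclideanSpace ℝ (Fin d) → ℝ)) (hS : ↑S ⊆ ⋃ i, F i)
    (w : (EuclideanSpace ℝ (Fin d) → ℝ) → ℝ)
    (hw : ∀ f ∈ S, 0 ≤ w f) (hwsum : ∑ f ∈ S, w f = 1) :
    (∫ x in K, fbar x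
        ∂(∑ i : Fin k, (ENNReal.ofReal (∑ f ∈ S, (F i).indicator w f)) • ρ i))
      - ∑ f ∈ S, w f * sInf (f '' K)
      ≤ α + Real.sqrt (β * k * ∑ f ∈ S, w f *
          ∫ x in K, (fbar x - f x) ^ 2
            ∂(∑ i : Fin k, (ENNReal.ofReal (∑ f ∈ S, (F i).indicator w f)) • ρ i)) :=
  combine_exploratory_general K hKm F hFdisj hFmeas fbar hfbar α β ρ hρ hexp S hS w hw hwsum
end

section
/- Let $K \subset \mathbb{R}^d$ be a convex body with $0 \in K$, and let $x \notin K$. For $z$ in the shadow $P_x(K)$ (the orthogonal projection of $K$ onto the hyperplane $x^\perp$), define $\Psi_K(x,z)$ as the ratio of the length of $K \cap [x, \pi_K(x,z)]$ to the length of the chord $[x, \pi_K(x,z)]$, where $\pi_K(x,z)$ is the point of $K$ on the line $\{z + tx : t \in \mathbb{R}\}$ minimising $\langle y, x\rangle$. Then $z \mapsto \Psi_K(x,z)$ is concave on $P_x(K)$. -/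
open MeasureTheory Set

/-- Orthogonal projection of `y` onto the hyperplane `x^⊥`. -/
noncomputable def projHyp {d : ℕ} (x y : EuclideanSpace ℝ (Fin d)) : EuclideanSpace ℝ (Fin d) :=
  (Submodule.orthogonalProjection (Submodule.span ℝ {x})ᗮ y : EuclideanSpace ℝ (Fin d))

/-- The shadow of `K` in direction `x`: projection of `K` onto `x^⊥`. -/
noncomputable def shadow {d : ℕ} (K : Set (EuclideanSpace ℝ (Fin d)))
    (x : EuclideanSpace ℝ (Fin d)) : Set (EuclideanSpace ℝ (Fin d)) :=
  projHyp x '' K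

/-- The point of `K` on the line `{z + t x : t ∈ ℝ}` minimising `⟨y, x⟩`. -/
noncomputable def piK {d : ℕ} (K : Set (EuclideanSpace ℝ (Fin d)))
    (x z : EuclideanSpace ℝ (Fin d)) : EuclideanSpace ℝ (Fin d) :=
  z + (sInf {t : ℝ | z + t • x ∈ K}) • x

/-- The depth/distance ratio `Ψ_K(x, z)`: the ratio of the one-dimensional Hausdorff
measure of `K ∩ [x, π_K(x,z)]` to the length of the chord `[x, π_K(x,z)]`. -/
noncomputable def PsiPt {d : ℕ} (K : Set (EuclideanSpace ℝ (Fin d)))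
    (x z : EuclideanSpace ℝ (Fin d)) : ℝ :=
  ((μH[1] (K ∩ segment ℝ x (piK K x z))) / (μH[1] (segment ℝ x (piK K x z)))).toReal

/-! Along the chord from `x` to the lowest point `π(z)` of `K` over `z`, the body `K` occupies
the final stretch `[λ(z), 1]` of affine parameters, so `Ψ = 1 - λ` and it suffices that `λ` is
convex. For `z = s z₁ + t z₂`, a suitable mixture of the two entry points is a point of `K` over
`l • z`, where `l = λ₁λ₂ / (sλ₂ + tλ₁)` is the weighted harmonic mean of `λ₁, λ₂`; it lies above
the chord point with parameter `l` because the lower boundary of `K` is convex, while the lowest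
point of `K` over `l • z` lies below it because that boundary is also nonpositive at `0`.
Convexity of the fibre over `l • z` puts the chord point in `K`, so
`λ(z) ≤ l ≤ sλ₁ + tλ₂`. -/

open AffineMap

section LineFiber

variable {E : Type*} [NormedAddCommGroup E] [NormedSpace ℝ E] {K : Set E} {x z : E}

def lineFiber (K : Set E) (x z : E) : Set ℝ := {t | z + t • x ∈ K}

noncomputable def fiberInf (K : Set E) (x z : E) : ℝ := sInf (lineFiber K x z)

theorem isCompact_lineFiber (hK : IsCompact K) (hx : x ≠ 0) (z : E) :
    IsCompact (lineFiber K x z) :=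
  ((Homeomorph.addLeft z).isClosedEmbedding.comp
    (isClosedEmbedding_smul_left hx)).isCompact_preimage hK

theorem convex_lineFiber (hK : Convex ℝ K) (z : E) : Convex ℝ (lineFiber K x z) :=
  (hK.translate_preimage_right z).linear_preimage (LinearMap.toSpanSingleton ℝ E x)

theorem convex_setOf_lineFiber_nonempty (hK : Convex ℝ K) :
    Convex ℝ {z | (lineFiber K x z).Nonempty} := by
  rintro z₁ ⟨t₁, h₁⟩ z₂ ⟨t₂, h₂⟩ a b ha hb hab
  have hsum : a • z₁ + b • z₂ + (a * t₁ + b * t₂) • x =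
      a • (z₁ + t₁ • x) + b • (z₂ + t₂ • x) := by
    module
  exact ⟨a * t₁ + b * t₂, show _ ∈ K from hsum ▸ hK h₁ h₂ ha hb hab⟩

theorem fiberInf_mem (hK : IsCompact K) (hx : x ≠ 0) (h : (lineFiber K x z).Nonempty) :
    z + fiberInf K x z • x ∈ K :=
  (isCompact_lineFiber hK hx z).sInf_mem h

theorem fiberInf_le (hK : IsCompact K) (hx : x ≠ 0) {t : ℝ} (ht : z + t • x ∈ K) :
    fiberInf K x z ≤ t :=
  csInf_le (isCompact_lineFiber hK hx z).bddBelow ht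

theorem convexOn_fiberInf (hK : IsCompact K) (hKconv : Convex ℝ K) (hx : x ≠ 0) :
    ConvexOn ℝ {z | (lineFiber K x z).Nonempty} (fiberInf K x) := by
  refine ⟨convex_setOf_lineFiber_nonempty hKconv, fun z₁ h₁ z₂ h₂ a b ha hb hab => ?_⟩
  apply fiberInf_le hK hx
  have hsum : a • z₁ + b • z₂ + (a • fiberInf K x z₁ + b • fiberInf K x z₂) • x =
      a • (z₁ + fiberInf K x z₁ • x) + b • (z₂ + fiberInf K x z₂ • x) := by
    module
  exact hsum ▸ hKconv (fiberInf_mem hK hx h₁) (fiberInf_mem hK hx h₂) ha hb hab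

end LineFiber

section EntryParam

variable {E : Type*} [NormedAddCommGroup E] [NormedSpace ℝ E] {K : Set E} {x p : E}

noncomputable def entryParam (K : Set E) (x p : E) : ℝ :=
  sInf {l ∈ Icc (0 : ℝ) 1 | lineMap x p l ∈ K}

theorem entryParam_le {l : ℝ} (hl : l ∈ Icc (0 : ℝ) 1) (h : lineMap x p l ∈ K) :
    entryParam K x p ≤ l :=
  csInf_le ⟨0, fun _ hl' => hl'.1.1⟩ ⟨hl, h⟩

theorem entryParam_mem (hK : IsClosed K) (hp : p ∈ K) :
    entryParam K x p ∈ Icc (0 : ℝ) 1 ∧ lineMap x p (entryParam K x p) ∈ K :=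
  (isCompact_Icc.inter_right (hK.preimage lineMap_continuous)).sInf_mem
    ⟨1, right_mem_Icc.2 zero_le_one, by simpa using hp⟩

theorem entryParam_pos (hK : IsClosed K) (hx : x ∉ K) (hp : p ∈ K) : 0 < entryParam K x p := by
  obtain ⟨⟨hnonneg, -⟩, hmem⟩ := entryParam_mem (x := x) hK hp
  refine hnonneg.lt_of_ne fun h => hx ?_
  simpa [← h] using hmem

theorem inter_segment_eq (hK : IsClosed K) (hKconv : Convex ℝ K) (hp : p ∈ K) :
    K ∩ segment ℝ x p = segment ℝ (lineMap x p (entryParam K x p)) p := by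
  obtain ⟨⟨hnonneg, hle⟩, hmem⟩ := entryParam_mem (x := x) hK hp
  have hconv : Convex ℝ {l ∈ Icc (0 : ℝ) 1 | lineMap x p l ∈ K} :=
    (convex_Icc 0 1).inter (hKconv.affine_preimage (lineMap x p))
  have hS : {l ∈ Icc (0 : ℝ) 1 | lineMap x p l ∈ K} = Icc (entryParam K x p) 1 := by
    refine Subset.antisymm (fun l hl => ⟨entryParam_le hl.1 hl.2, hl.1.2⟩) ?_
    exact hconv.ordConnected.out ⟨⟨hnonneg, hle⟩, hmem⟩
      ⟨right_mem_Icc.2 zero_le_one, by simpa using hp⟩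
  rw [segment_eq_image_lineMap, inter_comm, ← image_inter_preimage]
  rw [show Icc (0 : ℝ) 1 ∩ lineMap x p ⁻¹' K = Icc (entryParam K x p) 1 from hS,
    ← segment_eq_Icc hle, image_segment, lineMap_apply_one]

theorem hausdorffMeasure_inter_segment_div [MeasurableSpace E] [BorelSpace E] (hK : IsClosed K)
    (hKconv : Convex ℝ K) (hp : p ∈ K) (hxp : x ≠ p) :
    (μH[1] (K ∩ segment ℝ x p) / μH[1] (segment ℝ x p)).toReal = 1 - entryParam K x p := by
  have hle : entryParam K x p ≤ 1 := (entryParam_mem hK hp).1.2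
  have hdist : 0 < dist x p := dist_pos.2 hxp
  rw [inter_segment_eq hK hKconv hp, hausdorffMeasure_segment, hausdorffMeasure_segment,
    edist_dist, edist_dist, dist_lineMap_right, Real.norm_of_nonneg (sub_nonneg.2 hle),
    ENNReal.ofReal_mul (sub_nonneg.2 hle), ENNReal.mul_div_cancel_right
      (ENNReal.ofReal_pos.2 hdist).ne' ENNReal.ofReal_ne_top,
    ENNReal.toReal_ofReal (sub_nonneg.2 hle)]

end EntryParam

theorem mul_div_add_le_add {a b s t : ℝ} (ha : 0 < a) (hb : 0 < b) (hs : 0 ≤ s) (ht : 0 ≤ t)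
    (hst : s + t = 1) : a * b / (s * b + t * a) ≤ s * a + t * b := by
  have hD : 0 < s * b + t * a := by
    rcases hs.eq_or_lt with rfl | hs'
    · nlinarith
    · nlinarith [mul_pos hs' hb, mul_nonneg ht ha.le]
  have hprod : (s * a + t * b) * (s * b + t * a) = a * b + s * t * (a - b) ^ 2 := by
    linear_combination (a * b * (s + t + 1)) * hst
  rw [div_le_iff₀ hD, hprod]
  nlinarith [mul_nonneg (mul_nonneg hs ht) (sq_nonneg (a - b))]

section LowestPoint

variable {E : Type*} [NormedAddCommGroup E] [NormedSpace ℝ E] {K : Set E} {x z : E}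

theorem lineMap_add_smul (x z : E) (a l : ℝ) :
    lineMap x (z + a • x) l = l • z + (1 - l + l * a) • x := by
  rw [lineMap_apply_module]
  module

theorem entryParam_fiberInf_le (hK : IsCompact K) (hKconv : Convex ℝ K) (h0 : (0 : E) ∈ K)
    (hx : x ≠ 0) (hz : (lineFiber K x z).Nonempty) {l c : ℝ} (hl : l ∈ Icc (0 : ℝ) 1)
    (hc : 1 - l + l * fiberInf K x z ≤ c) (hmem : l • z + c • x ∈ K) :
    entryParam K x (z + fiberInf K x z • x) ≤ l := by
  have h0fib : (0 : ℝ) ∈ lineFiber K x 0 := by simpa [lineFiber] using h0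
  have hlow : fiberInf K x (l • z) ≤ 1 - l + l * fiberInf K x z := calc
    fiberInf K x (l • z) ≤ l * fiberInf K x z + (1 - l) * fiberInf K x 0 := by
      simpa using (convexOn_fiberInf hK hKconv hx).2 hz ⟨0, h0fib⟩ hl.1 (sub_nonneg.2 hl.2)
        (by ring)
    _ ≤ 1 - l + l * fiberInf K x z := by
      nlinarith [fiberInf_le hK hx h0fib, hl.2]
  refine entryParam_le hl ?_
  rw [lineMap_add_smul]
  have hlowK : fiberInf K x (l • z) ∈ lineFiber K x (l • z) := fiberInf_mem hK hx ⟨c, hmem⟩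
  exact (convex_lineFiber hKconv (l • z)).ordConnected.out hlowK hmem ⟨hlow, hc⟩

theorem convexOn_entryParam_fiberInf (hK : IsCompact K) (hKconv : Convex ℝ K) (h0 : (0 : E) ∈ K)
    (hx : x ∉ K) :
    ConvexOn ℝ {z | (lineFiber K x z).Nonempty}
      (fun z => entryParam K x (z + fiberInf K x z • x)) := by
  have hx0 : x ≠ 0 := fun h => hx (h ▸ h0)
  refine ⟨convex_setOf_lineFiber_nonempty hKconv, fun z₁ h₁ z₂ h₂ s t hs ht hst => ?_⟩
  set a₁ := fiberInf K x z₁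
  set a₂ := fiberInf K x z₂
  set l₁ := entryParam K x (z₁ + a₁ • x)
  set l₂ := entryParam K x (z₂ + a₂ • x)
  obtain ⟨hl₁, hp₁⟩ := entryParam_mem (x := x) hK.isClosed (fiberInf_mem hK hx0 h₁)
  obtain ⟨hl₂, hp₂⟩ := entryParam_mem (x := x) hK.isClosed (fiberInf_mem hK hx0 h₂)
  have hpos₁ : 0 < l₁ := entryParam_pos hK.isClosed hx (fiberInf_mem hK hx0 h₁)
  have hpos₂ : 0 < l₂ := entryParam_pos hK.isClosed hx (fiberInf_mem hK hx0 h₂)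
  have hD : 0 < s * l₂ + t * l₁ := by
    rcases hs.eq_or_lt with rfl | hs'
    · nlinarith
    · nlinarith [mul_pos hs' hpos₂, mul_nonneg ht hpos₁.le]
  set l := l₁ * l₂ / (s * l₂ + t * l₁)
  set μ := s * l₂ / (s * l₂ + t * l₁)
  have hl_le : l ≤ s * l₁ + t * l₂ := mul_div_add_le_add hpos₁ hpos₂ hs ht hst
  have hl : l ∈ Icc (0 : ℝ) 1 := ⟨by positivity, by nlinarith [hl₁.2, hl₂.2]⟩
  have hμ : μ ∈ Icc (0 : ℝ) 1 := ⟨by positivity, (div_le_one hD).2 (by nlinarith)⟩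
  have hq : μ • lineMap x (z₁ + a₁ • x) l₁ + (1 - μ) • lineMap x (z₂ + a₂ • x) l₂ =
      l • (s • z₁ + t • z₂) + (1 - l + l * (s * a₁ + t * a₂)) • x := by
    have hμ₁ : μ * l₁ = s * l := by simp only [μ, l]; field_simp
    have hμ₂ : (1 - μ) * l₂ = t * l := by simp only [μ, l]; field_simp; ring
    rw [lineMap_add_smul, lineMap_add_smul]
    match_scalars
    · linear_combination hμ₁
    · linear_combination (a₁ - 1) * hμ₁ + (a₂ - 1) * hμ₂ - l * hst
    · linear_combination hμ₂
  have hqK := hKconv hp₁ hp₂ hμ.1 (sub_nonneg.2 hμ.2) (add_sub_cancel μ 1)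
  rw [hq] at hqK
  have ha : fiberInf K x (s • z₁ + t • z₂) ≤ s * a₁ + t * a₂ :=
    (convexOn_fiberInf hK hKconv hx0).2 h₁ h₂ hs ht hst
  calc entryParam K x (s • z₁ + t • z₂ + fiberInf K x (s • z₁ + t • z₂) • x)
      ≤ l := entryParam_fiberInf_le hK hKconv h0 hx0
          (convex_setOf_lineFiber_nonempty hKconv h₁ h₂ hs ht hst) hl
          (by nlinarith [hl.1]) hqK
    _ ≤ s * l₁ + t * l₂ := hl_le

end LowestPoint

section Shadow

variable {d : ℕ} {K : Set (EuclideanSpace ℝ (Fin d))} {x : EuclideanSpace ℝ (Fin d)}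

theorem projHyp_eq_sub (x y : EuclideanSpace ℝ (Fin d)) :
    projHyp x y = y - (inner ℝ x y / ‖x‖ ^ 2) • x := by
  show ((ℝ ∙ x)ᗮ).starProjection y = _
  rw [Submodule.starProjection_orthogonal_val, Submodule.starProjection_singleton]
  rfl

theorem convex_shadow (hK : Convex ℝ K) : Convex ℝ (shadow K x) :=
  hK.linear_image ((ℝ ∙ x)ᗮ.starProjection : EuclideanSpace ℝ (Fin d) →L[ℝ] _).toLinearMap

theorem lineFiber_nonempty_of_mem_shadow {z : EuclideanSpace ℝ (Fin d)} (hz : z ∈ shadow K x) :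
    (lineFiber K x z).Nonempty := by
  obtain ⟨y, hy, rfl⟩ := hz
  exact ⟨inner ℝ x y / ‖x‖ ^ 2, by simpa [lineFiber, projHyp_eq_sub] using hy⟩

end Shadow

theorem psiPt_concave_general {d : ℕ} (K : Set (EuclideanSpace ℝ (Fin d)))
    (hKc : IsCompact K) (hKconv : Convex ℝ K)
    (h0 : (0 : EuclideanSpace ℝ (Fin d)) ∈ K)
    (x : EuclideanSpace ℝ (Fin d)) (hx : x ∉ K) :
    ConcaveOn ℝ (shadow K x) (PsiPt K x) := by
  have hx0 : x ≠ 0 := fun h => hx (h ▸ h0)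
  have hΛ := (convexOn_entryParam_fiberInf hKc hKconv h0 hx).subset
    (fun _ hz => lineFiber_nonempty_of_mem_shadow hz) (convex_shadow hKconv)
  refine ((concaveOn_const 1 (convex_shadow hKconv)).sub hΛ).congr fun z hz => ?_
  have hp : piK K x z ∈ K := fiberInf_mem hKc hx0 (lineFiber_nonempty_of_mem_shadow hz)
  exact (hausdorffMeasure_inter_segment_div hKc.isClosed hKconv hp
    (ne_of_mem_of_not_mem hp hx).symm).symm

theorem psiPt_concave {d : ℕ} (K : Set (EuclideanSpace ℝ (Fin d)))
    (hKc : IsCompact K) (hKconv : Convex ℝ K) (hKint : (interior K).Nonempty)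
    (h0 : (0 : EuclideanSpace ℝ (Fin d)) ∈ K)
    (x : EuclideanSpace ℝ (Fin d)) (hx : x ∉ K) :
    ConcaveOn ℝ (shadow K x) (PsiPt K x) :=
  psiPt_concave_general K hKc hKconv h0 x hx
end

section
/- Let $T : \mathbb{R}^d \to \mathbb{R}^d$ be a linear bijection, $K \subset \mathbb{R}^d$ a convex body with $0 \in K$, and $x \notin K$. Then the average depth/distance ratio satisfies $\Psi_K(x) = \Psi_{TK}(Tx)$, where $\Psi_K(x) = \frac{1}{\mathrm{vol}_{d-1}(P_x(K))} \int_{P_x(K)} \Psi_K(x,z)\, d\mathrm{vol}_{d-1}(z)$. -/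
open MeasureTheory Set

/-- The average depth/distance ratio `Ψ_K(x)` with respect to the uniform
probability measure on the shadow `P_x(K)`. -/
noncomputable def PsiAvg {d : ℕ} (K : Set (EuclideanSpace ℝ (Fin d)))
    (x : EuclideanSpace ℝ (Fin d)) : ℝ :=
  (∫ z in shadow K x, PsiPt K x z ∂(μH[(d : ℝ) - 1])) / (μH[(d : ℝ) - 1] (shadow K x)).toReal

/-- The maximum depth/distance ratio `Ψ^∞_K(x)`. -/
noncomputable def PsiSup {d : ℕ} (K : Set (EuclideanSpace ℝ (Fin d)))
    (x : EuclideanSpace ℝ (Fin d)) : ℝ :=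
  sSup (PsiPt K x '' shadow K x)

/-!
A linear bijection `T` multiplies lengths along any fixed line by a constant, and it maps the
chord of `K` through `z` in direction `x` onto the chord of `TK` through `Tz` in direction `Tx`;
hence `Ψ_{TK}(Tx, P_{Tx} T z) = Ψ_K(x, z)`. The map `z ↦ P_{Tx} T z` is a linear isomorphism from
`x^⊥` onto `(Tx)^⊥` carrying the shadow `P_x K` onto `P_{Tx}(TK)`, so it multiplies
`(d-1)`-dimensional Hausdorff measure by a constant (its norm determinant), which cancels in the
average.
-/

open scoped NNReal ENNReal
open Module

theorem hausdorffMeasure_image_of_edist_eq {X Y : Type*} [EMetricSpace X] [EMetricSpace Y]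
    [MeasurableSpace X] [BorelSpace X] [MeasurableSpace Y] [BorelSpace Y]
    (e : X ≃ Y) {A : Set X} {r : ℝ≥0} (hr : r ≠ 0)
    (he : ∀ a ∈ A, ∀ b ∈ A, edist (e a) (e b) = r * edist a b) {s : ℝ} (hs : 0 ≤ s) :
    μH[s] (e '' A) = r ^ s * μH[s] A := by
  have hlip : LipschitzOnWith r e A := fun a ha b hb => (he a ha b hb).le
  have hlip_symm : LipschitzOnWith r⁻¹ e.symm (e '' A) := by
    rintro _ ⟨a, ha, rfl⟩ _ ⟨b, hb, rfl⟩
    rw [e.symm_apply_apply, e.symm_apply_apply, he a ha b hb, ENNReal.coe_inv hr, ← mul_assoc,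
      ENNReal.inv_mul_cancel (by simpa) ENNReal.coe_ne_top, one_mul]
  refine le_antisymm (hlip.hausdorffMeasure_image_le hs) ?_
  have hback := hlip_symm.hausdorffMeasure_image_le hs
  rw [e.symm_image_image] at hback
  calc (r : ℝ≥0∞) ^ s * μH[s] A ≤ r ^ s * ((r⁻¹ : ℝ≥0) ^ s * μH[s] (e '' A)) := by gcongr
    _ = μH[s] (e '' A) := by
      rw [← mul_assoc, ← ENNReal.mul_rpow_of_nonneg _ _ hs, ← ENNReal.coe_mul, mul_inv_cancel₀ hr,
        ENNReal.coe_one, ENNReal.one_rpow, one_mul]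

theorem LinearEquiv.image_segment {E F : Type*} [AddCommGroup E] [Module ℝ E] [AddCommGroup F]
    [Module ℝ F] (T : E ≃ₗ[ℝ] F) (p q : E) : T '' segment ℝ p q = segment ℝ (T p) (T q) :=
  _root_.image_segment ℝ T.toLinearMap.toAffineMap p q

theorem LinearEquiv.hausdorffMeasure_image_of_subset_segment {E F : Type*}
    [NormedAddCommGroup E] [NormedSpace ℝ E] [MeasurableSpace E] [BorelSpace E]
    [NormedAddCommGroup F] [NormedSpace ℝ F] [MeasurableSpace F] [BorelSpace F]
    (T : E ≃ₗ[ℝ] F) {p q : E} (hpq : p ≠ q) {A : Set E} (hA : A ⊆ segment ℝ p q) :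
    μH[1] (T '' A) = (‖T q - T p‖₊ / ‖q - p‖₊ : ℝ≥0) * μH[1] A := by
  have hqp : ‖q - p‖₊ ≠ 0 := by simpa [sub_eq_zero] using hpq.symm
  have hr : ‖T q - T p‖₊ / ‖q - p‖₊ ≠ 0 := by simpa [sub_eq_zero] using hpq.symm
  have hdist : ∀ a ∈ A, ∀ b ∈ A,
      edist (T a) (T b) = (‖T q - T p‖₊ / ‖q - p‖₊ : ℝ≥0) * edist a b := by
    intro a ha b hb
    rw [segment_eq_image'] at hA
    obtain ⟨s, -, rfl⟩ := hA ha
    obtain ⟨t, -, rfl⟩ := hA hb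
    have hdiff : p + s • (q - p) - (p + t • (q - p)) = (s - t) • (q - p) := by module
    rw [edist_nndist, edist_nndist, nndist_eq_nnnorm, nndist_eq_nnnorm, ← ENNReal.coe_mul,
      ← map_sub, hdiff, map_smul, map_sub, nnnorm_smul, nnnorm_smul]
    congr 1
    field_simp
  simpa using hausdorffMeasure_image_of_edist_eq T.toEquiv hr hdist zero_le_one

theorem LinearMap.setIntegral_image_hausdorffMeasure {U V G : Type*}
    [NormedAddCommGroup U] [InnerProductSpace ℝ U] [FiniteDimensional ℝ U]
    [MeasurableSpace U] [BorelSpace U]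
    [NormedAddCommGroup V] [InnerProductSpace ℝ V] [MeasurableSpace V] [BorelSpace V]
    [NormedAddCommGroup G] [NormedSpace ℝ G]
    (f : U →ₗ[ℝ] V) (hf : Function.Injective f) (s : Set U) (g : V → G) :
    ∫ y in f '' s, g y ∂μH[finrank ℝ U] = f.normDet • ∫ x in s, g (f x) ∂μH[finrank ℝ U] := by
  have hemb : MeasurableEmbedding f :=
    (LinearMap.isClosedEmbedding_of_injective (LinearMap.ker_eq_bot.2 hf)).measurableEmbedding
  have hrestrict : (μH[finrank ℝ U] : Measure V).restrict (f '' s) =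
      ENNReal.ofReal f.normDet • (μH[finrank ℝ U].restrict s).map f := by
    ext t ht
    rw [Measure.restrict_apply ht, Measure.smul_apply, hemb.map_apply,
      Measure.restrict_apply (hemb.measurable ht), ← image_preimage_inter,
      f.hausdorffMeasure_image, smul_eq_mul]
  rw [hrestrict, integral_smul_measure, hemb.integral_map,
    ENNReal.toReal_ofReal f.normDet_nonneg]

theorem LinearMap.setAverage_image_hausdorffMeasure {U V G : Type*}
    [NormedAddCommGroup U] [InnerProductSpace ℝ U] [FiniteDimensional ℝ U]
    [MeasurableSpace U] [BorelSpace U]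
    [NormedAddCommGroup V] [InnerProductSpace ℝ V] [MeasurableSpace V] [BorelSpace V]
    [NormedAddCommGroup G] [NormedSpace ℝ G]
    (f : U →ₗ[ℝ] V) (hf : Function.Injective f) (s : Set U) (g : V → G) :
    ⨍ y in f '' s, g y ∂μH[finrank ℝ U] = ⨍ x in s, g (f x) ∂μH[finrank ℝ U] := by
  have hdet : f.normDet ≠ 0 := by
    rwa [ne_eq, LinearMap.normDet_eq_zero_iff_ker_ne_bot, not_not, LinearMap.ker_eq_bot]
  rw [setAverage_eq, setAverage_eq, f.setIntegral_image_hausdorffMeasure hf, measureReal_def,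
    measureReal_def, f.hausdorffMeasure_image, ENNReal.toReal_mul,
    ENNReal.toReal_ofReal f.normDet_nonneg, smul_smul, mul_inv_rev, mul_assoc,
    inv_mul_cancel₀ hdet, mul_one]

section Shadow

variable {d : ℕ}

local notation "𝔼" => EuclideanSpace ℝ (Fin d)

theorem finrank_orthogonal_span_singleton_eq {x : 𝔼} (hx : x ≠ 0) :
    (finrank ℝ (ℝ ∙ x)ᗮ : ℝ) = d - 1 := by
  have := (ℝ ∙ x).finrank_add_finrank_orthogonal
  rw [finrank_span_singleton hx, finrank_euclideanSpace_fin] at this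
  rw [eq_sub_iff_add_eq, add_comm]
  exact_mod_cast this

theorem projHyp_eq_starProjection (x y : 𝔼) : projHyp x y = (ℝ ∙ x)ᗮ.starProjection y := rfl

theorem projHyp_eq_sub_smul (x y : 𝔼) :
    projHyp x y = y - (inner ℝ x y / ‖x‖ ^ 2) • x := by
  rw [projHyp_eq_starProjection, Submodule.starProjection_orthogonal_val,
    Submodule.starProjection_singleton]
  rfl

theorem projHyp_add_smul_self (x y : 𝔼) (c : ℝ) :
    projHyp x (y + c • x) = projHyp x y := by
  rw [projHyp_eq_starProjection, projHyp_eq_starProjection, map_add, map_smul,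
    Submodule.starProjection_orthogonalComplement_singleton_eq_zero, smul_zero, add_zero]

theorem projHyp_mem (x y : 𝔼) : projHyp x y ∈ (ℝ ∙ x)ᗮ :=
  Submodule.starProjection_apply_mem _ y

theorem projHyp_of_mem {x y : 𝔼} (hy : y ∈ (ℝ ∙ x)ᗮ) : projHyp x y = y :=
  Submodule.starProjection_eq_self_iff.2 hy

theorem projHyp_map_projHyp (T : 𝔼 →ₗ[ℝ] 𝔼) (x y : 𝔼) :
    projHyp (T x) (T (projHyp x y)) = projHyp (T x) (T y) := by
  rw [projHyp_eq_sub_smul x y, map_sub, map_smul, sub_eq_add_neg, ← neg_smul,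
    projHyp_add_smul_self]

theorem IsCompact.shadow {K : Set 𝔼} (hK : IsCompact K) (x : 𝔼) : IsCompact (shadow K x) :=
  hK.image (ℝ ∙ x)ᗮ.starProjection.continuous

theorem subtype_image_preimage_shadow (K : Set 𝔼) (x : 𝔼) :
    (ℝ ∙ x)ᗮ.subtype '' (Subtype.val ⁻¹' shadow K x) = shadow K x := by
  rw [Submodule.coe_subtype, image_preimage_eq_of_subset]
  rintro _ ⟨k, -, rfl⟩
  exact ⟨⟨_, projHyp_mem x k⟩, rfl⟩

noncomputable def shadowMap (T : 𝔼 ≃ₗ[ℝ] 𝔼) (x : 𝔼) : (ℝ ∙ x)ᗮ →ₗ[ℝ] 𝔼 :=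
  (ℝ ∙ T x)ᗮ.starProjection.toLinearMap ∘ₗ T.toLinearMap ∘ₗ (ℝ ∙ x)ᗮ.subtype

theorem shadowMap_apply (T : 𝔼 ≃ₗ[ℝ] 𝔼) (x : 𝔼) (v : (ℝ ∙ x)ᗮ) :
    shadowMap T x v = projHyp (T x) (T v) :=
  rfl

theorem shadowMap_injective (T : 𝔼 ≃ₗ[ℝ] 𝔼) (x : 𝔼) : Function.Injective (shadowMap T x) := by
  have hleft : ∀ v : (ℝ ∙ x)ᗮ, projHyp x (T.symm (shadowMap T x v)) = v := fun v => by
    rw [shadowMap_apply]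
    simpa [projHyp_of_mem v.2] using projHyp_map_projHyp T.symm.toLinearMap (T x) (T v)
  exact fun v w hvw => Subtype.ext <| by rw [← hleft v, ← hleft w, hvw]

theorem shadowMap_image_preimage_shadow (T : 𝔼 ≃ₗ[ℝ] 𝔼) (K : Set 𝔼) (x : 𝔼) :
    shadowMap T x '' (Subtype.val ⁻¹' shadow K x) = shadow (T '' K) (T x) := by
  have hshadow : shadow (T '' K) (T x) = (fun z => projHyp (T x) (T z)) '' shadow K x := by
    simp only [shadow, image_image]
    exact image_congr fun k _ => (projHyp_map_projHyp T.toLinearMap x k).symm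
  conv_rhs => rw [hshadow, ← subtype_image_preimage_shadow K x, image_image]
  rfl

theorem piK_image (T : 𝔼 ≃ₗ[ℝ] 𝔼) (K : Set 𝔼) (x z : 𝔼) :
    piK (T '' K) (T x) (T z) = T (piK K x z) := by
  have hline : {t : ℝ | T z + t • T x ∈ T '' K} = {t : ℝ | z + t • x ∈ K} := by
    ext t
    rw [mem_ofPred_eq, ← map_smul, ← map_add, T.injective.mem_set_image, mem_ofPred_eq]
  rw [piK, piK, hline, map_add, map_smul]

theorem piK_add_smul {K : Set 𝔼} {x z : 𝔼}
    (hne : {t : ℝ | z + t • x ∈ K}.Nonempty) (hbdd : BddBelow {t : ℝ | z + t • x ∈ K}) (c : ℝ) :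
    piK K x (z + c • x) = piK K x z := by
  have hshift : {t : ℝ | z + c • x + t • x ∈ K} =
      OrderIso.subRight c '' {t : ℝ | z + t • x ∈ K} := by
    ext t
    simp [sub_eq_iff_eq_add, add_assoc, ← add_smul, add_comm c]
  rw [piK, piK, hshift, ← (OrderIso.subRight c).map_csInf' hne hbdd, OrderIso.subRight_apply]
  module

theorem bddBelow_setOf_add_smul_mem {K : Set 𝔼} (hK : Bornology.IsBounded K) {x : 𝔼}
    (hx : x ≠ 0) (z : 𝔼) : BddBelow {t : ℝ | z + t • x ∈ K} := by
  have hanti : AntilipschitzWith ‖x‖₊⁻¹ (fun t : ℝ => z + t • x) :=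
    AntilipschitzWith.of_le_mul_dist fun s t => by
      rw [dist_add_left, dist_eq_norm, dist_eq_norm, ← sub_smul, norm_smul, NNReal.coe_inv,
        coe_nnnorm, mul_left_comm, inv_mul_cancel₀ (norm_ne_zero_iff.2 hx), mul_one]
  exact (hanti.isBounded_preimage hK).bddBelow

theorem nonempty_setOf_add_smul_mem {K : Set 𝔼} {x z : 𝔼} (hz : z ∈ shadow K x) :
    {t : ℝ | z + t • x ∈ K}.Nonempty := by
  obtain ⟨k, hk, rfl⟩ := hz
  exact ⟨inner ℝ x k / ‖x‖ ^ 2, by rwa [mem_ofPred_eq, projHyp_eq_sub_smul, sub_add_cancel]⟩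

theorem PsiPt_image (T : 𝔼 ≃ₗ[ℝ] 𝔼) (K : Set 𝔼) (x z : 𝔼) :
    PsiPt (T '' K) (T x) (T z) = PsiPt K x z := by
  rw [PsiPt, PsiPt, piK_image, ← T.image_segment, ← image_inter T.injective]
  rcases eq_or_ne x (piK K x z) with hx | hx
  -- a degenerate chord is a `μH[1]`-null singleton, and `0 / 0 = 0`
  · have := Measure.nullSingletonClass_hausdorff 𝔼 one_pos
    simp [← hx]
  have hr : ‖T (piK K x z) - T x‖₊ / ‖piK K x z - x‖₊ ≠ 0 := by
    simpa [sub_eq_zero] using hx.symm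
  rw [T.hausdorffMeasure_image_of_subset_segment hx inter_subset_right,
    T.hausdorffMeasure_image_of_subset_segment hx subset_rfl,
    ENNReal.mul_div_mul_left _ _ (by simpa using hr) ENNReal.coe_ne_top]

theorem PsiPt_add_smul {K : Set 𝔼} {x z : 𝔼}
    (hne : {t : ℝ | z + t • x ∈ K}.Nonempty) (hbdd : BddBelow {t : ℝ | z + t • x ∈ K}) (c : ℝ) :
    PsiPt K x (z + c • x) = PsiPt K x z := by
  rw [PsiPt, PsiPt, piK_add_smul hne hbdd]

theorem PsiPt_image_projHyp (T : 𝔼 ≃ₗ[ℝ] 𝔼) {K : Set 𝔼} (hK : Bornology.IsBounded K)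
    {x z : 𝔼} (hx : x ≠ 0) (hz : z ∈ shadow K x) :
    PsiPt (T '' K) (T x) (projHyp (T x) (T z)) = PsiPt K x z := by
  rw [projHyp_eq_sub_smul, sub_eq_add_neg, ← neg_smul, ← map_smul, ← map_add, PsiPt_image,
    PsiPt_add_smul (nonempty_setOf_add_smul_mem hz) (bddBelow_setOf_add_smul_mem hK hx z)]

theorem PsiAvg_eq_setAverage (K : Set 𝔼) (x : 𝔼) :
    PsiAvg K x = ⨍ z in shadow K x, PsiPt K x z ∂μH[(d : ℝ) - 1] := by
  rw [PsiAvg, setAverage_eq, measureReal_def, smul_eq_mul, div_eq_inv_mul]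

end Shadow

theorem psi_invariant_general {d : ℕ} (T : EuclideanSpace ℝ (Fin d) ≃ₗ[ℝ] EuclideanSpace ℝ (Fin d))
    (K : Set (EuclideanSpace ℝ (Fin d)))
    (hKc : IsCompact K)
    (h0 : (0 : EuclideanSpace ℝ (Fin d)) ∈ K)
    (x : EuclideanSpace ℝ (Fin d)) (hx : x ∉ K) :
    PsiAvg K x = PsiAvg (T '' K) (T x) := by
  have hx0 : x ≠ 0 := by rintro rfl; exact hx h0
  have hmeas : MeasurableSet (Subtype.val ⁻¹' shadow K x : Set (ℝ ∙ x)ᗮ) :=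
    (hKc.shadow x).isClosed.measurableSet.preimage measurable_subtype_coe
  rw [PsiAvg_eq_setAverage, PsiAvg_eq_setAverage, ← finrank_orthogonal_span_singleton_eq hx0,
    ← subtype_image_preimage_shadow, ← shadowMap_image_preimage_shadow T,
    LinearMap.setAverage_image_hausdorffMeasure _ (Submodule.injective_subtype _),
    LinearMap.setAverage_image_hausdorffMeasure _ (shadowMap_injective T x)]
  exact setAverage_congr_fun hmeas <| ae_of_all _ fun v hv =>
    (PsiPt_image_projHyp T hKc.isBounded hx0 hv).symm

theorem psi_invariant {d : ℕ} (T : EuclideanSpace ℝ (Fin d) ≃ₗ[ℝ] EuclideanSpace ℝ (Fin d))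
    (K : Set (EuclideanSpace ℝ (Fin d)))
    (hKc : IsCompact K) (hKconv : Convex ℝ K) (hKint : (interior K).Nonempty)
    (h0 : (0 : EuclideanSpace ℝ (Fin d)) ∈ K)
    (x : EuclideanSpace ℝ (Fin d)) (hx : x ∉ K) :
    PsiAvg K x = PsiAvg (T '' K) (T x) :=
  psi_invariant_general T K hKc h0 x hx
end

section
/- Matrix determinant step: Let $\lambda : U \to (0, \infty)$ be convex and differentiable at $z \in U \subset \mathbb{R}^{d-1}$, with $0 \in U$, $\lambda(z) \ge 1 - 1/(2d)$ and $\lambda(0) \le 1$. Define $\Lambda(z) = \lambda(z) z$. Then $\det(D\Lambda(z)) = \lambda(z)^{d-1}\left(1 + \frac{\langle \nabla\lambda(z), z\rangle}{\lambda(z)}\right) \ge \lambda(z)^{d-1}\left(2 - \frac{\lambda(0)}{\lambda(z)}\right) \ge \frac{1}{4}$ for $d \ge 2$. -/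
/-!
The Jacobian `λ(z) Id + z ⊗ ∇λ(z)` is `λ(z)` times the transvection
`x ↦ x + ⟪∇λ(z), x⟫ z / λ(z)`, whose determinant is `1 + ⟪∇λ(z), z⟫ / λ(z)`.
The supporting hyperplane of the convex `λ` at `z`, evaluated at `0`, gives
`⟪∇λ(z), z⟫ ≥ λ(z) - λ(0)`, so the determinant is at least `λ(z)^(d-2) (2 λ(z) - 1)`
once `λ(0) ≤ 1`; Bernoulli's inequality bounds `λ(z)^(d-2)` below by `1/2`, and
`2 λ(z) - 1 ≥ 1/2`.
-/

open Module

theorem ConvexOn.add_le_of_hasFDerivAt {E : Type*} [NormedAddCommGroup E] [NormedSpace ℝ E]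
    {s : Set E} {f : E → ℝ} {f' : E →L[ℝ] ℝ} {x y : E} (hf : ConvexOn ℝ s f)
    (hx : x ∈ s) (hy : y ∈ s) (hf' : HasFDerivAt f f' x) :
    f x + f' (y - x) ≤ f y := by
  let ℓ : ℝ →ᵃ[ℝ] E := AffineMap.lineMap x y
  have hℓ : HasDerivAt (f ∘ ℓ) (f' (y - x)) 0 :=
    hf'.comp_hasDerivAt_of_eq 0 AffineMap.hasDerivAt_lineMap (AffineMap.lineMap_apply_zero x y).symm
  have := (hf.comp_affineMap ℓ).le_slope_of_hasDerivAt (x := 0) (y := 1)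
    (by simpa [ℓ] using hx) (by simpa [ℓ] using hy) one_pos hℓ
  simpa [slope, ℓ, le_sub_iff_add_le'] using this

theorem LinearMap.det_smul_id_add_smulRight {K V : Type*} [Field K] [AddCommGroup V]
    [Module K V] [FiniteDimensional K V] {c : K} (hc : c ≠ 0) (f : Dual K V) (v : V) :
    (c • LinearMap.id + f.smulRight v).det = c ^ finrank K V * (1 + f v / c) := by
  have : c • LinearMap.id + f.smulRight v = c • transvection (c⁻¹ • f) v := by
    ext x
    simp [transvection.apply, smul_smul, hc]
  rw [this, LinearMap.det_smul, transvection.det]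
  simp [div_eq_inv_mul]

theorem one_half_le_pow_of_one_sub_le {n : ℕ} {x : ℝ} (hx : 1 - 1 / (2 * (n + 2)) ≤ x) :
    1 / 2 ≤ x ^ n := by
  have hstep : (n : ℝ) * (1 / (2 * (n + 2))) ≤ 1 / 2 := by
    rw [mul_one_div, div_le_div_iff₀ (by positivity) (by norm_num)]; linarith
  have hsmall : 1 / (2 * ((n : ℝ) + 2)) ≤ 1 := by
    rw [div_le_one (by positivity)]; linarith
  have hbern := one_add_mul_le_pow (a := x - 1) (by linarith) n
  rw [add_sub_cancel] at hbern
  nlinarith [mul_le_mul_of_nonneg_left (show 1 - x ≤ 1 / (2 * (n + 2)) by linarith)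
    (Nat.cast_nonneg (α := ℝ) n)]

theorem one_fourth_le_pow_mul_two_sub_div {d : ℕ} (hd : 2 ≤ d) {x a : ℝ}
    (hx : 1 - 1 / (2 * (d : ℝ)) ≤ x) (ha : a ≤ 1) :
    1 / 4 ≤ x ^ (d - 1) * (2 - a / x) := by
  obtain ⟨n, rfl⟩ := Nat.exists_eq_add_of_le' hd
  push_cast at hx
  have hx_ge : 3 / 4 ≤ x := by
    have : 1 / (2 * ((n : ℝ) + 2)) ≤ 1 / 4 := by gcongr; linarith [n.cast_nonneg (α := ℝ)]
    linarith
  calc 1 / 4 ≤ x ^ n * (2 * x - a) := by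
        have hpow := one_half_le_pow_of_one_sub_le hx
        nlinarith
    _ = x ^ (n + 1) * (2 - a / x) := by
        rw [pow_succ]; field_simp

theorem jacobian_det_step_general {d : ℕ} (hd : 2 ≤ d)
    (U : Set (EuclideanSpace ℝ (Fin (d - 1)))) (h0U : (0 : EuclideanSpace ℝ (Fin (d - 1))) ∈ U)
    (lam : EuclideanSpace ℝ (Fin (d - 1)) → ℝ)
    (hconv : ConvexOn ℝ U lam)
    (z : EuclideanSpace ℝ (Fin (d - 1))) (hz : z ∈ U)
    (g : EuclideanSpace ℝ (Fin (d - 1))) (hgrad : HasGradientAt lam g z)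
    (hlamz : 1 - 1 / (2 * (d : ℝ)) ≤ lam z) (hlam0 : lam 0 ≤ 1) :
    -- the Jacobian of `Λ(z) = λ(z) z` is `λ(z) Id + z ∇λ(z)ᵀ`, and its determinant
    -- satisfies the stated identity and lower bounds
    HasFDerivAt (fun y => lam y • y)
        (lam z • ContinuousLinearMap.id ℝ (EuclideanSpace ℝ (Fin (d - 1)))
          + (innerSL ℝ g).smulRight z) z
      ∧ (lam z • ContinuousLinearMap.id ℝ (EuclideanSpace ℝ (Fin (d - 1)))
          + (innerSL ℝ g).smulRight z).det
        = lam z ^ (d - 1) * (1 + (inner ℝ g z : ℝ) / lam z)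
      ∧ lam z ^ (d - 1) * (1 + (inner ℝ g z : ℝ) / lam z)
        ≥ lam z ^ (d - 1) * (2 - lam 0 / lam z)
      ∧ lam z ^ (d - 1) * (2 - lam 0 / lam z) ≥ 1 / 4 := by
  have hfderiv : HasFDerivAt lam (innerSL ℝ g) z := hgrad.hasFDerivAt
  have hlamz_pos : 0 < lam z := by
    refine lt_of_lt_of_le ?_ hlamz
    have : (2 : ℝ) ≤ d := by exact_mod_cast hd
    rw [sub_pos, div_lt_one (by positivity)]
    linarith
  refine ⟨hfderiv.smul (hasFDerivAt_id z), ?_, ?_,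
    one_fourth_le_pow_mul_two_sub_div hd hlamz hlam0⟩
  · have := LinearMap.det_smul_id_add_smulRight hlamz_pos.ne' (innerSL ℝ g : _ →L[ℝ] ℝ) z
    rwa [finrank_euclideanSpace_fin] at this
  · have hsupport := hconv.add_le_of_hasFDerivAt hz h0U hfderiv
    rw [zero_sub, map_neg, innerSL_apply_apply] at hsupport
    have : (lam z - lam 0) / lam z ≤ inner ℝ g z / lam z := by gcongr; linarith
    rw [sub_div, div_self hlamz_pos.ne'] at this
    gcongr
    linarith

theorem jacobian_det_step {d : ℕ} (hd : 2 ≤ d)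
    (U : Set (EuclideanSpace ℝ (Fin (d - 1)))) (h0U : (0 : EuclideanSpace ℝ (Fin (d - 1))) ∈ U)
    (lam : EuclideanSpace ℝ (Fin (d - 1)) → ℝ)
    (hconv : ConvexOn ℝ U lam) (hpos : ∀ y ∈ U, 0 < lam y)
    (z : EuclideanSpace ℝ (Fin (d - 1))) (hz : z ∈ U)
    (g : EuclideanSpace ℝ (Fin (d - 1))) (hgrad : HasGradientAt lam g z)
    (hlamz : 1 - 1 / (2 * (d : ℝ)) ≤ lam z) (hlam0 : lam 0 ≤ 1) :
    -- the Jacobian of `Λ(z) = λ(z) z` is `λ(z) Id + z ∇λ(z)ᵀ`, and its determinant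
    -- satisfies the stated identity and lower bounds
    HasFDerivAt (fun y => lam y • y)
        (lam z • ContinuousLinearMap.id ℝ (EuclideanSpace ℝ (Fin (d - 1)))
          + (innerSL ℝ g).smulRight z) z
      ∧ (lam z • ContinuousLinearMap.id ℝ (EuclideanSpace ℝ (Fin (d - 1)))
          + (innerSL ℝ g).smulRight z).det
        = lam z ^ (d - 1) * (1 + (inner ℝ g z : ℝ) / lam z)
      ∧ lam z ^ (d - 1) * (1 + (inner ℝ g z : ℝ) / lam z)
        ≥ lam z ^ (d - 1) * (2 - lam 0 / lam z)
      ∧ lam z ^ (d - 1) * (2 - lam 0 / lam z) ≥ 1 / 4 :=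
  jacobian_det_step_general hd U h0U lam hconv z hz g hgrad hlamz hlam0
end

section
/- Let $h : \mathbb{R} \to [0,\infty)$ be an even, log-concave, integrable function with $h(0) > 0$. Then $\int_{-\infty}^\infty t^2 h(t) \, dt \le \frac{2}{h(0)^2}\left(\int_{-\infty}^\infty h(t) \, dt\right)^3$. -/
/-!
Write `M = ∫_{t > 0} h` and `β = 1 - e⁻²`. If `h 0 e^{-kt} ≤ h t`, log-concavity between `0` and
`t` gives `h 0 e^{-kx} ≤ h x` on `[0, t]`, hence `h 0 (1 - e^{-kt}) / k ≤ M`. For `k = h 0 β / M`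
this is impossible once `kt > 2`, so `h t ≤ h 0 e^{-kt}` beyond `T = 2 / k`, while `h ≤ h 0`
everywhere by evenness. Therefore
`∫_{t > 0} t² h ≤ h 0 (T³ / 3 + 2 / k³) = 14 M³ / (3 h 0² β³) ≤ 8 M³ / h 0²`, as `β³ ≥ 7 / 12`,
and doubling gives the theorem.
-/

open MeasureTheory Set Real

theorem seven_div_twelve_le_one_sub_exp_neg_two_pow_three : (7 : ℝ) / 12 ≤ (1 - exp (-2)) ^ 3 := by
  have h7 : 7 ≤ exp 2 := by
    rw [show (2 : ℝ) = 1 + 1 by norm_num, exp_add]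
    nlinarith [exp_one_gt_d9]
  have hE : exp (-2) ≤ 1 / 7 := by
    rw [exp_neg, one_div]
    exact inv_anti₀ (by norm_num) h7
  calc (7 : ℝ) / 12 ≤ (1 - 1 / 7) ^ 3 := by norm_num
    _ ≤ (1 - exp (-2)) ^ 3 := by gcongr

theorem integral_Ioc_exp_neg_mul {k t : ℝ} (hk : k ≠ 0) (ht : 0 ≤ t) :
    ∫ x in Ioc 0 t, exp (-(k * x)) = (1 - exp (-(k * t))) / k := by
  rw [← intervalIntegral.integral_of_le ht]
  have hderiv : ∀ x ∈ uIcc 0 t, HasDerivAt (fun x => -exp (-(k * x)) / k) (exp (-(k * x))) x := by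
    intro x _
    have hlin : HasDerivAt (fun x => -(k * x)) (-k) x := by
      simpa using ((hasDerivAt_id x).const_mul k).fun_neg
    exact (hlin.exp.fun_neg.div_const k).congr_deriv (by field_simp)
  rw [intervalIntegral.integral_eq_sub_of_hasDerivAt hderiv
    (by apply Continuous.intervalIntegrable; fun_prop)]
  simp only [mul_zero, neg_zero, exp_zero]
  ring

theorem integral_Ioi_sq_mul_exp_neg_mul {k : ℝ} (hk : 0 < k) :
    ∫ t in Ioi 0, t ^ 2 * exp (-(k * t)) = 2 / k ^ 3 := by
  have := integral_rpow_mul_exp_neg_mul_Ioi (a := 3) (by norm_num) hk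
  norm_num [rpow_two, Gamma_ofNat_eq_factorial] at this
  rw [this]
  ring

theorem integrableOn_Ioi_sq_mul_exp_neg_mul {k : ℝ} (hk : 0 < k) :
    IntegrableOn (fun t => t ^ 2 * exp (-(k * t))) (Ioi 0) :=
  Integrable.of_integral_ne_zero (by rw [integral_Ioi_sq_mul_exp_neg_mul hk]; positivity)

theorem integral_eq_two_mul_setIntegral_Ioi_of_even {f : ℝ → ℝ} (hf : Integrable f)
    (heven : ∀ t, f (-t) = f t) : ∫ t, f t = 2 * ∫ t in Ioi 0, f t := by
  have hneg := integral_comp_neg_Ioi 0 f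
  simp only [heven, neg_zero] at hneg
  rw [← intervalIntegral.integral_Iic_add_Ioi hf.integrableOn hf.integrableOn, ← hneg]
  ring

theorem setIntegral_Ioi_sq_mul_le_of_le_mul_exp {g : ℝ → ℝ} {c k T : ℝ} (hc : 0 ≤ c) (hk : 0 < k)
    (hT : 0 ≤ T) (hmom : IntegrableOn (fun t => t ^ 2 * g t) (Ioi 0)) (hle : ∀ t, g t ≤ c)
    (htail : ∀ t, T < t → g t ≤ c * exp (-(k * t))) :
    ∫ t in Ioi 0, t ^ 2 * g t ≤ c * (T ^ 3 / 3 + 2 / k ^ 3) := by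
  rw [← Ioc_union_Ioi_eq_Ioi hT, setIntegral_union (Ioc_disjoint_Ioi le_rfl) measurableSet_Ioi
    (hmom.mono_set Ioc_subset_Ioi_self) (hmom.mono_set (Ioi_subset_Ioi hT)), mul_add]
  have hexp : IntegrableOn (fun t => c * (t ^ 2 * exp (-(k * t)))) (Ioi 0) :=
    (integrableOn_Ioi_sq_mul_exp_neg_mul hk).const_mul c
  gcongr ?_ + ?_
  · calc ∫ t in Ioc 0 T, t ^ 2 * g t ≤ ∫ t in Ioc 0 T, c * t ^ 2 :=
          setIntegral_mono_on (hmom.mono_set Ioc_subset_Ioi_self)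
            (by fun_prop : Continuous fun t : ℝ => c * t ^ 2).integrableOn_Ioc measurableSet_Ioc
            fun t _ => by rw [mul_comm c]; exact mul_le_mul_of_nonneg_left (hle t) (sq_nonneg t)
      _ = c * (T ^ 3 / 3) := by
          rw [integral_const_mul, ← intervalIntegral.integral_of_le hT, integral_pow]
          ring
  · calc ∫ t in Ioi T, t ^ 2 * g t ≤ ∫ t in Ioi T, c * (t ^ 2 * exp (-(k * t))) :=
          setIntegral_mono_on (hmom.mono_set (Ioi_subset_Ioi hT))
            (hexp.mono_set (Ioi_subset_Ioi hT)) measurableSet_Ioi fun t ht => by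
              rw [mul_left_comm]; exact mul_le_mul_of_nonneg_left (htail t ht) (sq_nonneg t)
      _ ≤ ∫ t in Ioi 0, c * (t ^ 2 * exp (-(k * t))) :=
          setIntegral_mono_set hexp (.of_forall fun t => by positivity)
            (Ioi_subset_Ioi hT).eventuallyLE
      _ = c * (2 / k ^ 3) := by rw [integral_const_mul, integral_Ioi_sq_mul_exp_neg_mul hk]

def IsLogConcave (h : ℝ → ℝ) : Prop :=
  ∀ s t : ℝ, ∀ lam ∈ Icc (0 : ℝ) 1, h s ^ lam * h t ^ (1 - lam) ≤ h (lam * s + (1 - lam) * t)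

namespace IsLogConcave

variable {h : ℝ → ℝ}

theorem le_apply_zero (hlc : IsLogConcave h) (hnn : ∀ t, 0 ≤ h t) (heven : ∀ t, h (-t) = h t)
    (t : ℝ) : h t ≤ h 0 :=
  calc h t = h t ^ (1 / 2 : ℝ) * h (-t) ^ (1 - 1 / 2 : ℝ) := by
        rw [heven, ← rpow_add' (hnn t) (by norm_num)]; norm_num
    _ ≤ h (1 / 2 * t + (1 - 1 / 2) * -t) := hlc _ _ _ ⟨by norm_num, by norm_num⟩
    _ = h 0 := by ring_nf

theorem mul_exp_le_apply_of_mem_Icc (hlc : IsLogConcave h) (h0 : 0 < h 0)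
    {k t x : ℝ} (ht : 0 < t) (hx : x ∈ Icc 0 t) (hkt : h 0 * exp (-(k * t)) ≤ h t) :
    h 0 * exp (-(k * x)) ≤ h x := by
  set lam := x / t
  have hlam : lam ∈ Icc (0 : ℝ) 1 := ⟨div_nonneg hx.1 ht.le, (div_le_one ht).2 hx.2⟩
  have hexp : exp (-(k * t)) ^ lam = exp (-(k * x)) := by
    rw [← exp_mul]; congr 1; simp only [lam]; field_simp
  have hpow : h 0 ^ lam * h 0 ^ (1 - lam) = h 0 := by rw [← rpow_add h0]; simp
  calc h 0 * exp (-(k * x)) = (h 0 * exp (-(k * t))) ^ lam * h 0 ^ (1 - lam) := by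
        rw [mul_rpow h0.le (exp_pos _).le, hexp]; linear_combination (-exp (-(k * x))) * hpow
    _ ≤ h t ^ lam * h 0 ^ (1 - lam) := by gcongr; exact hlam.1
    _ ≤ h (lam * t + (1 - lam) * 0) := hlc t 0 lam hlam
    _ = h x := by congr 1; simp only [lam]; field_simp; ring

theorem mul_one_sub_exp_div_le_setIntegral (hlc : IsLogConcave h) (h0 : 0 < h 0) {k t : ℝ}
    (hk : k ≠ 0) (ht : 0 < t) (hint : IntegrableOn h (Ioc 0 t)) (hkt : h 0 * exp (-(k * t)) ≤ h t) :
    h 0 * (1 - exp (-(k * t))) / k ≤ ∫ x in Ioc 0 t, h x :=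
  calc h 0 * (1 - exp (-(k * t))) / k = ∫ x in Ioc 0 t, h 0 * exp (-(k * x)) := by
        rw [integral_const_mul, integral_Ioc_exp_neg_mul hk ht.le, mul_div_assoc]
    _ ≤ ∫ x in Ioc 0 t, h x :=
        setIntegral_mono_on
          (by fun_prop : Continuous fun x => h 0 * exp (-(k * x))).integrableOn_Ioc hint
          measurableSet_Ioc fun x hx =>
            hlc.mul_exp_le_apply_of_mem_Icc h0 ht (Ioc_subset_Icc_self hx) hkt

theorem apply_le_mul_exp (hlc : IsLogConcave h) (h0 : 0 < h 0)
    {c k t : ℝ} (hk : 0 < k) (hc : 0 ≤ c) (hct : c < k * t) (hint : IntegrableOn h (Ioc 0 t))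
    (hmass : ∫ x in Ioc 0 t, h x ≤ h 0 * (1 - exp (-c)) / k) :
    h t ≤ h 0 * exp (-(k * t)) := by
  by_contra! hlt
  have ht : 0 < t := pos_of_mul_pos_right (hc.trans_lt hct) hk.le
  have hlow := hlc.mul_one_sub_exp_div_le_setIntegral h0 hk.ne' ht hint hlt.le
  have hexp : exp (-(k * t)) < exp (-c) := exp_lt_exp.2 (by linarith)
  have : h 0 * (1 - exp (-c)) / k < h 0 * (1 - exp (-(k * t))) / k := by gcongr
  linarith

theorem setIntegral_Ioi_sq_mul_le (hlc : IsLogConcave h) (hnn : ∀ t, 0 ≤ h t)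
    (hmax : ∀ t, h t ≤ h 0) (h0 : 0 < h 0) (hint : IntegrableOn h (Ioi 0))
    (hmom : IntegrableOn (fun t => t ^ 2 * h t) (Ioi 0)) :
    ∫ t in Ioi 0, t ^ 2 * h t ≤ 8 * (∫ t in Ioi 0, h t) ^ 3 / h 0 ^ 2 := by
  set M := ∫ t in Ioi 0, h t
  have hnn_ae : 0 ≤ᵐ[volume.restrict (Ioi 0)] h := .of_forall hnn
  have hM_nonneg : 0 ≤ M := setIntegral_nonneg measurableSet_Ioi fun t _ => hnn t
  obtain hM | hM := hM_nonneg.eq_or_lt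
  · have hzero := (setIntegral_eq_zero_iff_of_nonneg_ae hnn_ae hint).1 hM.symm
    rw [← hM, integral_eq_zero_of_ae (by filter_upwards [hzero] with t ht; simp [ht])]
    simp
  set β := 1 - exp (-2)
  have hβ : 0 < β := by simp [β]
  set k := h 0 * β / M
  have hk : 0 < k := by positivity
  have hkM : h 0 * β / k = M := by simp only [k]; field_simp
  have htail : ∀ t, 2 / k < t → h t ≤ h 0 * exp (-(k * t)) := fun t ht =>
    hlc.apply_le_mul_exp h0 hk zero_le_two (by rwa [div_lt_iff₀' hk] at ht)
      (hint.mono_set Ioc_subset_Ioi_self)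
      ((setIntegral_mono_set hint hnn_ae Ioc_subset_Ioi_self.eventuallyLE).trans_eq hkM.symm)
  have hβ3 := seven_div_twelve_le_one_sub_exp_neg_two_pow_three
  calc ∫ t in Ioi 0, t ^ 2 * h t ≤ h 0 * ((2 / k) ^ 3 / 3 + 2 / k ^ 3) :=
        setIntegral_Ioi_sq_mul_le_of_le_mul_exp h0.le hk (by positivity) hmom hmax htail
    _ = 14 / 3 * M ^ 3 / (h 0 ^ 2 * β ^ 3) := by simp only [k]; field_simp; ring
    _ ≤ 8 * M ^ 3 / h 0 ^ 2 := by
        rw [div_le_div_iff₀ (by positivity) (by positivity)]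
        nlinarith [mul_le_mul_of_nonneg_right hβ3 (by positivity : 0 ≤ M ^ 3 * h 0 ^ 2)]

end IsLogConcave

theorem logconcave_second_moment (h : ℝ → ℝ) (hnn : ∀ t, 0 ≤ h t)
    (heven : ∀ t, h (-t) = h t)
    (hlc : ∀ s t : ℝ, ∀ lam ∈ Set.Icc (0 : ℝ) 1,
      h s ^ lam * h t ^ (1 - lam) ≤ h (lam * s + (1 - lam) * t))
    (hint : Integrable h) (h0 : 0 < h 0) :
    ∫ t, t ^ 2 * h t ≤ (2 / h 0 ^ 2) * (∫ t, h t) ^ 3 := by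
  replace hlc : IsLogConcave h := hlc
  by_cases hmom : Integrable fun t : ℝ => t ^ 2 * h t
  swap
  · rw [integral_undef hmom]
    have : 0 ≤ ∫ t, h t := integral_nonneg hnn
    positivity
  rw [integral_eq_two_mul_setIntegral_Ioi_of_even hmom fun t => by rw [heven, neg_sq],
    integral_eq_two_mul_setIntegral_Ioi_of_even hint heven]
  have hhalf := hlc.setIntegral_Ioi_sq_mul_le hnn (hlc.le_apply_zero hnn heven) h0
    hint.integrableOn hmom.integrableOn
  calc 2 * ∫ t in Ioi 0, t ^ 2 * h t ≤ 2 * (8 * (∫ t in Ioi 0, h t) ^ 3 / h 0 ^ 2) := by gcongr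
    _ = 2 / h 0 ^ 2 * (2 * ∫ t in Ioi 0, h t) ^ 3 := by ring
end
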